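/- Fix integers n ≥ 2 and m ≥ 2, and set d = 2·n·m. Let Γ be the additive submonoid of ℕ generated by g0 = n·m, g1 = (4n−1)·m and g2 = 4n²·m − 1 (the semigroup of the singularity of type (n, 4n−1)(m, nm−1)), and let R(n') = #(Γ ∩ [0,n']). Then R(j·d) = (j+1)(j+2)/2 for every integer j with 0 ≤ j ≤ d−3. -/

import Mathlib

/-!
With `K = n·m` the generators are `g₀ = K`, `g₁ = 4K - m` and `g₂ = 4nK - 1`. Since
`n·g₁ = (4n - 1)·g₀` and `m·g₂ = g₁ + 4(nm - 1)·g₀`, every element of `Γ` can be written as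
`a·g₀ + b·g₁ + c·g₂` with `b < n` and `c < m`; putting `e = b + n·c < K`, this element equals
`(a + 4e)·K - (b·m + c)` with `0 ≤ b·m + c < K`, so the pair `(a, e)` is unique and the element is
at most `2j·K` iff `a + 4e ≤ 2j`. For `j < 2K` that inequality already forces `e < K`, so `R(j·d)`
counts the pairs `(a, e)` with `a + 4e ≤ 2j`, and summing over `s = a + 4e` gives
`∑_{s ≤ 2j} (⌊s/4⌋ + 1) = (j + 1)(j + 2)/2`.
-/

section

open Finset

theorem AddSubmonoid.mem_closure_triple {A : Type*} [AddCommMonoid A] {a b c x : A} :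
    x ∈ AddSubmonoid.closure ({a, b, c} : Set A) ↔ ∃ i j k : ℕ, i • a + j • b + k • c = x := by
  rw [← Set.singleton_union, AddSubmonoid.closure_union, AddSubmonoid.mem_sup]
  simp_rw [AddSubmonoid.mem_closure_singleton, AddSubmonoid.mem_closure_pair]
  constructor
  · rintro ⟨_, ⟨i, rfl⟩, _, ⟨j, k, rfl⟩, rfl⟩
    exact ⟨i, j, k, add_assoc _ _ _⟩
  · rintro ⟨i, j, k, rfl⟩
    exact ⟨_, ⟨i, rfl⟩, _, ⟨j, k, rfl⟩, (add_assoc _ _ _).symm⟩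

theorem Nat.le_mul_iff_of_add_eq_mul {K x r s t : ℕ} (hr : r < K) (h : x + r = s * K) :
    x ≤ t * K ↔ s ≤ t := by
  constructor
  · intro hx
    by_contra! hts
    have : (t + 1) * K ≤ s * K := Nat.mul_le_mul_right K hts
    nlinarith
  · intro hst
    nlinarith [Nat.mul_le_mul_right K hst]

theorem Nat.eq_of_add_eq_mul {K x r₁ r₂ s₁ s₂ : ℕ} (h₁ : r₁ < K) (h₂ : r₂ < K)
    (e₁ : x + r₁ = s₁ * K) (e₂ : x + r₂ = s₂ * K) : s₁ = s₂ ∧ r₁ = r₂ := by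
  have hs : s₁ = s₂ := le_antisymm
    ((Nat.le_mul_iff_of_add_eq_mul h₁ e₁).mp (by omega))
    ((Nat.le_mul_iff_of_add_eq_mul h₂ e₂).mp (by omega))
  subst hs
  exact ⟨rfl, by omega⟩

theorem two_mul_sum_range_div_four_add_one (j : ℕ) :
    2 * ∑ s ∈ range (2 * j + 1), (s / 4 + 1) = (j + 1) * (j + 2) := by
  induction j with
  | zero => simp
  | succ j ih =>
    rw [show 2 * (j + 1) + 1 = 2 * j + 1 + 1 + 1 by ring, sum_range_succ, sum_range_succ]
    have : (2 * j + 1) / 4 + (2 * j + 2) / 4 = j := by omega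
    nlinarith

namespace FamilyIV

def indexSet (j : ℕ) : Finset (ℕ × ℕ) :=
  {p ∈ range (2 * j + 1) ×ˢ range (j + 1) | p.1 + 4 * p.2 ≤ 2 * j}

theorem card_indexSet (j : ℕ) : #(indexSet j) = (j + 1) * (j + 2) / 2 := by
  have fiber : ∀ a ∈ range (2 * j + 1),
      #{e ∈ range (j + 1) | a + 4 * e ≤ 2 * j} = (2 * j - a) / 4 + 1 := by
    intro a ha
    rw [mem_range] at ha
    rw [← card_range ((2 * j - a) / 4 + 1)]
    congr 1
    ext e
    simp only [mem_filter, mem_range]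
    omega
  calc #(indexSet j)
      = ∑ a ∈ range (2 * j + 1), ((2 * j - a) / 4 + 1) := by
        rw [indexSet, card_filter, sum_product]
        simp_rw [← card_filter]
        exact sum_congr rfl fiber
    _ = ∑ s ∈ range (2 * j + 1), (s / 4 + 1) := sum_range_reflect (fun s => s / 4 + 1) _
    _ = (j + 1) * (j + 2) / 2 := by rw [← two_mul_sum_range_div_four_add_one j]; omega

variable {n m : ℕ}

def normalForm (n m a e : ℕ) : ℕ :=
  a * (n * m) + e % n * ((4 * n - 1) * m) + e / n * (4 * n ^ 2 * m - 1)

def defect (n m e : ℕ) : ℕ := e % n * m + e / n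

theorem defect_lt {e : ℕ} (hn : 0 < n) (he : e < n * m) : defect n m e < n * m := by
  have hb : e % n + 1 ≤ n := Nat.mod_lt e hn
  have hc : e / n < m := Nat.div_lt_of_lt_mul he
  unfold defect
  nlinarith

theorem defect_div {e : ℕ} (he : e < n * m) : defect n m e / m = e % n := by
  have hc : e / n < m := Nat.div_lt_of_lt_mul he
  rw [defect, add_comm, Nat.add_mul_div_right _ _ (Nat.zero_lt_of_lt hc), Nat.div_eq_of_lt hc,
    zero_add]

theorem defect_mod {e : ℕ} (he : e < n * m) : defect n m e % m = e / n := by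
  rw [defect, Nat.mul_add_mod_self_right, Nat.mod_eq_of_lt (Nat.div_lt_of_lt_mul he)]

theorem defect_injOn : Set.InjOn (defect n m) (Set.Iio (n * m)) := by
  intro e₁ h₁ e₂ h₂ h
  rw [← Nat.mod_add_div e₁ n, ← Nat.mod_add_div e₂ n, ← defect_div h₁, ← defect_div h₂,
    ← defect_mod h₁, ← defect_mod h₂, h]

theorem normalForm_add_defect (hn : 0 < n) (hm : 0 < m) (a e : ℕ) :
    normalForm n m a e + defect n m e = (a + 4 * e) * (n * m) := by
  have h₁ : 1 ≤ 4 * n ^ 2 * m := Nat.one_le_iff_ne_zero.mpr (by positivity)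
  have h₂ : 1 ≤ 4 * n := by omega
  unfold normalForm defect
  have he := Nat.mod_add_div e n
  generalize e % n = b, e / n = c at he ⊢
  subst he
  zify [h₁, h₂]
  ring

theorem normalForm_le_mul_iff (hn : 0 < n) (hm : 0 < m) {a e : ℕ} (he : e < n * m) (j : ℕ) :
    normalForm n m a e ≤ j * (2 * n * m) ↔ a + 4 * e ≤ 2 * j := by
  rw [show j * (2 * n * m) = 2 * j * (n * m) by ring]
  exact Nat.le_mul_iff_of_add_eq_mul (defect_lt hn he) (normalForm_add_defect hn hm a e)

theorem eq_of_normalForm_eq (hn : 0 < n) (hm : 0 < m) {a₁ e₁ a₂ e₂ : ℕ}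
    (h₁ : e₁ < n * m) (h₂ : e₂ < n * m) (h : normalForm n m a₁ e₁ = normalForm n m a₂ e₂) :
    a₁ = a₂ ∧ e₁ = e₂ := by
  have key₁ := normalForm_add_defect hn hm a₁ e₁
  rw [h] at key₁
  obtain ⟨hs, hd⟩ := Nat.eq_of_add_eq_mul (defect_lt hn h₁) (defect_lt hn h₂) key₁
    (normalForm_add_defect hn hm a₂ e₂)
  have he := defect_injOn h₁ h₂ hd
  exact ⟨by omega, he⟩

theorem exists_normalForm (hn : 0 < n) (hm : 0 < m) (a b c : ℕ) :
    ∃ a' e, e < n * m ∧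
      normalForm n m a' e = a * (n * m) + b * ((4 * n - 1) * m) + c * (4 * n ^ 2 * m - 1) := by
  have h₁ : 1 ≤ 4 * n ^ 2 * m := Nat.one_le_iff_ne_zero.mpr (by positivity)
  have h₂ : 1 ≤ 4 * n := by omega
  have h₃ : 1 ≤ n * m := Nat.one_le_iff_ne_zero.mpr (by positivity)
  obtain ⟨q₂, r₂, hr₂, rfl⟩ : ∃ q r, r < m ∧ c = m * q + r :=
    ⟨c / m, c % m, Nat.mod_lt _ hm, (Nat.div_add_mod c m).symm⟩
  obtain ⟨q₁, r₁, hr₁, hb⟩ : ∃ q r, r < n ∧ b + q₂ = n * q + r :=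
    ⟨(b + q₂) / n, (b + q₂) % n, Nat.mod_lt _ hn, (Nat.div_add_mod (b + q₂) n).symm⟩
  have hmod : (r₁ + n * r₂) % n = r₁ := by rw [Nat.add_mul_mod_self_left, Nat.mod_eq_of_lt hr₁]
  have hdiv : (r₁ + n * r₂) / n = r₂ := by
    rw [Nat.add_mul_div_left _ _ hn, Nat.div_eq_of_lt hr₁, zero_add]
  refine ⟨a + q₂ * (4 * (n * m - 1)) + q₁ * (4 * n - 1), r₁ + n * r₂, ?_, ?_⟩
  · nlinarith
  rw [normalForm, hmod, hdiv]
  have hb' : (b : ℤ) + q₂ = n * q₁ + r₁ := by exact_mod_cast hb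
  zify [h₁, h₂, h₃]
  linear_combination (1 - 4 * (n : ℤ)) * m * hb'

theorem mem_closure_iff_exists_normalForm (hn : 0 < n) (hm : 0 < m) {x : ℕ} :
    x ∈ AddSubmonoid.closure ({n * m, (4 * n - 1) * m, 4 * n ^ 2 * m - 1} : Set ℕ) ↔
      ∃ a e, e < n * m ∧ normalForm n m a e = x := by
  rw [AddSubmonoid.mem_closure_triple]
  simp only [smul_eq_mul]
  constructor
  · rintro ⟨a, b, c, rfl⟩
    exact exists_normalForm hn hm a b c
  · rintro ⟨a, e, -, rfl⟩
    exact ⟨a, e % n, e / n, rfl⟩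

theorem normalForm_injOn_indexSet (hn : 0 < n) (hm : 0 < m) {j : ℕ} (hj : j < 2 * (n * m)) :
    Set.InjOn (fun p : ℕ × ℕ => normalForm n m p.1 p.2) (indexSet j) := by
  rintro ⟨a₁, e₁⟩ h₁ ⟨a₂, e₂⟩ h₂ h
  simp only [indexSet, coe_filter, Set.mem_ofPred_eq] at h₁ h₂
  obtain ⟨rfl, rfl⟩ := eq_of_normalForm_eq hn hm (by omega) (by omega) h
  rfl

theorem setOf_mem_closure_le_eq_image (hn : 0 < n) (hm : 0 < m) {j : ℕ} (hj : j < 2 * (n * m)) :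
    {x : ℕ | x ∈ AddSubmonoid.closure ({n * m, (4 * n - 1) * m, 4 * n ^ 2 * m - 1} : Set ℕ) ∧
      x ≤ j * (2 * n * m)} = (indexSet j).image (fun p => normalForm n m p.1 p.2) := by
  ext x
  simp only [Set.mem_ofPred_eq, mem_closure_iff_exists_normalForm hn hm, coe_image, Set.mem_image,
    indexSet, coe_filter, mem_product, mem_range, Prod.exists]
  constructor
  · rintro ⟨⟨a, e, he, rfl⟩, hle⟩
    rw [normalForm_le_mul_iff hn hm he] at hle
    exact ⟨a, e, ⟨⟨by omega, by omega⟩, hle⟩, rfl⟩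
  · rintro ⟨a, e, ⟨-, hle⟩, rfl⟩
    have he : e < n * m := by omega
    exact ⟨⟨a, e, he, rfl⟩, (normalForm_le_mul_iff hn hm he j).mpr hle⟩

end FamilyIV

end

/-- Family (iv): for `n ≥ 2`, `m ≥ 2` and `d = 2·n·m`, the semigroup generated by
`n·m`, `(4n−1)·m`, `4n²·m − 1` (singularity of type `(n,4n−1)(m,nm−1)`) satisfies the
Borodzik–Livingston counting condition `R(j·d) = (j+1)(j+2)/2` for `0 ≤ j ≤ d−3`. -/
theorem counting_condition_family_iv
    (n m d : ℕ) (hn : 2 ≤ n) (hm : 2 ≤ m) (hd : d = 2 * n * m) :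
    ∀ j : ℕ, j ≤ d - 3 →
      {x : ℕ | x ∈ AddSubmonoid.closure
          ({n * m, (4 * n - 1) * m, 4 * n ^ 2 * m - 1} : Set ℕ) ∧
        x ≤ j * d}.ncard = (j + 1) * (j + 2) / 2 := by
  intro j hj
  subst hd
  have hn₀ : 0 < n := by omega
  have hm₀ : 0 < m := by omega
  have hj' : j < 2 * (n * m) := by
    have : 2 * 2 ≤ n * m := Nat.mul_le_mul hn hm
    rw [mul_assoc] at hj
    omega
  rw [FamilyIV.setOf_mem_closure_le_eq_image hn₀ hm₀ hj', Set.ncard_coe_finset,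
    Finset.card_image_of_injOn (FamilyIV.normalForm_injOn_indexSet hn₀ hm₀ hj'),
    FamilyIV.card_indexSet]
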